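/- For the choice f(t,s) = t·s/(t+s), the mean E_n of μ_n satisfies E_n ≥ 1.43·(5/2)ⁿ for every n ≥ 0. -/

import Mathlib

open MeasureTheory Filter

/-- The recursively defined sequence of measures: `μ₀ = (δ₁ + δ₂)/2` and `μ_{n+1}` is the
pushforward of `μ_n ⊗ μ_n ⊗ μ_n ⊗ μ_n` under `(a,b,c,d) ↦ a + b + f c d`. -/
noncomputable def mu (f : ℝ → ℝ → ℝ) : ℕ → Measure ℝ
  | 0 => (2 : ENNReal)⁻¹ • Measure.dirac 1 + (2 : ENNReal)⁻¹ • Measure.dirac 2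
  | n + 1 =>
      Measure.map (fun p : ℝ × ℝ × ℝ × ℝ => p.1 + p.2.1 + f p.2.2.1 p.2.2.2)
        ((mu f n).prod ((mu f n).prod ((mu f n).prod (mu f n))))

/-- The mean of `μ_n`. -/
noncomputable def En (f : ℝ → ℝ → ℝ) (n : ℕ) : ℝ := ∫ x, x ∂(mu f n)

/-!
Write `f(t, s) = t s / (t + s)`, `a_n = (5/2)^n`, and `E_n`, `V_n` for the mean and variance of
`μ_n`. Since `f` maps `[a, 2a]²` into `[a/2, a]`, `μ_n` is supported on `[a_n, 2a_n]`. A step of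
the recursion is the law of `X₁ + X₂ + f(X₃, X₄)` with independent `X_i ∼ μ_n`. On `[a, 2a]²` we
have `f(c, d) ≥ (c + d)/4 - (c - d)²/(8a)`, whence `E_{n+1} ≥ (5/2) E_n - V_n/(4 a_n)`, and `f` is
`4/9`-Lipschitz in each variable, whence `V_{n+1} ≤ (2 + 64/81) V_n`. So `V_n / a_n²` decays like
`(904/2025)^n`, and the relative losses `E_n/a_n - E_{n+1}/a_{n+1}` sum to less than
`E_0 - 1.43 = 0.07`.
-/

open Set ProbabilityTheory Function

section Product

variable {α β : Type*} [MeasurableSpace α] [MeasurableSpace β] {μ : Measure α} {ν : Measure β}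

lemma ae_prod_of_ae_of_ae [SFinite ν] {p : α → Prop} {q : β → Prop} (hp : ∀ᵐ x ∂μ, p x)
    (hq : ∀ᵐ y ∂ν, q y) : ∀ᵐ z ∂(μ.prod ν), p z.1 ∧ q z.2 :=
  (Measure.quasiMeasurePreserving_fst.ae hp).and (Measure.quasiMeasurePreserving_snd.ae hq)

lemma integral_add_prod [IsProbabilityMeasure μ] [IsProbabilityMeasure ν] {g : α → ℝ} {h : β → ℝ}
    (hg : Integrable g μ) (hh : Integrable h ν) :
    ∫ p, g p.1 + h p.2 ∂(μ.prod ν) = ∫ x, g x ∂μ + ∫ y, h y ∂ν := by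
  rw [integral_add (hg.comp_fst ν) (hh.comp_snd μ), integral_fun_fst, integral_fun_snd]
  simp

end Product

noncomputable def seriesParallel (f : ℝ → ℝ → ℝ) (μ : Measure ℝ) : Measure ℝ :=
  (μ.prod (μ.prod (μ.prod μ))).map fun p => p.1 + p.2.1 + f p.2.2.1 p.2.2.2

lemma mu_succ (f : ℝ → ℝ → ℝ) (n : ℕ) : mu f (n + 1) = seriesParallel f (mu f n) := rfl

lemma seriesParallel_eq_map_add (f : ℝ → ℝ → ℝ) (μ : Measure ℝ) :
    seriesParallel f μ = (μ.prod (μ.prod (μ.prod μ))).map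
      fun p => id p.1 + (fun q : ℝ × ℝ × ℝ => id q.1 + uncurry f q.2) p.2 := by
  simp only [seriesParallel, id, uncurry, add_assoc]

section SeriesParallel

variable {f : ℝ → ℝ → ℝ} {μ : Measure ℝ} [IsProbabilityMeasure μ]

lemma isProbabilityMeasure_seriesParallel (hf : Measurable (uncurry f)) :
    IsProbabilityMeasure (seriesParallel f μ) :=
  Measure.isProbabilityMeasure_map (by unfold uncurry at hf; fun_prop)

lemma integral_id_seriesParallel (hf : Measurable (uncurry f)) (hμ : Integrable id μ)
    (hfμ : Integrable (uncurry f) (μ.prod μ)) :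
    ∫ x, x ∂(seriesParallel f μ) = 2 * ∫ x, x ∂μ + ∫ p, uncurry f p ∂(μ.prod μ) := by
  have hsnd : Integrable (fun q : ℝ × ℝ × ℝ => id q.1 + uncurry f q.2) (μ.prod (μ.prod μ)) :=
    (hμ.comp_fst _).add (hfμ.comp_snd _)
  rw [seriesParallel_eq_map_add, integral_map (f := fun x => x) (by unfold uncurry at hf; fun_prop)
      aestronglyMeasurable_id, integral_add_prod hμ hsnd, integral_add_prod hμ hfμ]
  simp only [id]
  ring

lemma variance_id_seriesParallel (hf : Measurable (uncurry f)) (hμ : MemLp id 2 μ)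
    (hfμ : MemLp (uncurry f) 2 (μ.prod μ)) :
    Var[id; seriesParallel f μ] = 2 * Var[id; μ] + Var[uncurry f; μ.prod μ] := by
  rw [seriesParallel_eq_map_add, variance_id_map (by unfold uncurry at hf; fun_prop)]
  have hsnd : MemLp (fun q : ℝ × ℝ × ℝ => id q.1 + uncurry f q.2) 2 (μ.prod (μ.prod μ)) :=
    (hμ.comp_fst _).add (hfμ.comp_snd _)
  rw [variance_add_prod hμ hsnd, variance_add_prod hμ hfμ]
  ring

lemma ae_mem_Icc_seriesParallel (hf : Measurable (uncurry f)) {a b a' b' : ℝ}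
    (hμ : ∀ᵐ x ∂μ, x ∈ Icc a b) (hfab : ∀ c ∈ Icc a b, ∀ d ∈ Icc a b, f c d ∈ Icc a' b') :
    ∀ᵐ x ∂(seriesParallel f μ), x ∈ Icc (2 * a + a') (2 * b + b') := by
  refine ae_map_iff (by unfold uncurry at hf; fun_prop) measurableSet_Icc |>.2 ?_
  filter_upwards [ae_prod_of_ae_of_ae hμ (ae_prod_of_ae_of_ae hμ (ae_prod_of_ae_of_ae hμ hμ))]
    with p ⟨⟨h1, h1'⟩, ⟨h2, h2'⟩, hc, hd⟩
  obtain ⟨h3, h3'⟩ := hfab _ hc _ hd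
  constructor <;> linarith

end SeriesParallel

noncomputable def parallel (t s : ℝ) : ℝ := t * s / (t + s)

lemma measurable_uncurry_parallel : Measurable (uncurry parallel) := by
  unfold uncurry parallel; fun_prop

section Parallel

variable {a c c' d d' : ℝ}

lemma parallel_comm (t s : ℝ) : parallel t s = parallel s t := by
  unfold parallel; rw [mul_comm, add_comm]

lemma parallel_mem_Icc (ha : 0 < a) (hc : c ∈ Icc a (2 * a)) (hd : d ∈ Icc a (2 * a)) :
    parallel c d ∈ Icc (a / 2) a := by
  obtain ⟨hc1, hc2⟩ := hc; obtain ⟨hd1, hd2⟩ := hd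
  have hcd : 0 < c + d := by linarith
  constructor
  · rw [parallel, le_div_iff₀ hcd]; nlinarith
  · rw [parallel, div_le_iff₀ hcd]; nlinarith

lemma sub_sq_div_le_parallel (ha : 0 < a) (hc : a ≤ c) (hd : a ≤ d) :
    (c + d) / 4 - (c - d) ^ 2 / (8 * a) ≤ parallel c d := by
  have hcd : 0 < c + d := by linarith
  have hpar : parallel c d = (c + d) / 4 - (c - d) ^ 2 / (4 * (c + d)) := by
    unfold parallel; field_simp; ring
  have hdenom : (c - d) ^ 2 / (4 * (c + d)) ≤ (c - d) ^ 2 / (8 * a) :=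
    div_le_div_of_nonneg_left (sq_nonneg _) (by positivity) (by linarith)
  linarith

-- `∂ parallel c d / ∂ c = d² / (c + d)²`, which is at most `4/9` when `d ≤ 2c`.
lemma abs_parallel_sub_parallel_left_le (ha : 0 < a) (hc : c ∈ Icc a (2 * a))
    (hc' : c' ∈ Icc a (2 * a)) (hd : d ∈ Icc a (2 * a)) :
    |parallel c d - parallel c' d| ≤ 4 / 9 * |c - c'| := by
  obtain ⟨hc1, hc2⟩ := hc; obtain ⟨hc1', hc2'⟩ := hc'; obtain ⟨hd1, hd2⟩ := hd
  have hcd : c + d ≠ 0 := by linarith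
  have hc'd : c' + d ≠ 0 := by linarith
  have hX : 0 < (c + d) * (c' + d) := by nlinarith
  have hdiff : parallel c d - parallel c' d = d ^ 2 / ((c + d) * (c' + d)) * (c - c') := by
    unfold parallel; field_simp; ring
  have hfactor : d ^ 2 / ((c + d) * (c' + d)) ≤ 4 / 9 := by
    rw [div_le_iff₀ hX]; nlinarith
  rw [hdiff, abs_mul, abs_of_nonneg (by positivity)]
  gcongr

lemma sq_parallel_sub_parallel_le (ha : 0 < a) (hc : c ∈ Icc a (2 * a))
    (hd : d ∈ Icc a (2 * a)) (hc' : c' ∈ Icc a (2 * a)) (hd' : d' ∈ Icc a (2 * a)) :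
    (parallel c d - parallel c' d') ^ 2 ≤ 32 / 81 * ((c - c') ^ 2 + (d - d') ^ 2) := by
  have h1 := pow_le_pow_left₀ (abs_nonneg _) (abs_parallel_sub_parallel_left_le ha hc hc' hd) 2
  have h2 := pow_le_pow_left₀ (abs_nonneg _) (abs_parallel_sub_parallel_left_le ha hd hd' hc') 2
  rw [parallel_comm d, parallel_comm d'] at h2
  rw [sq_abs, mul_pow, sq_abs] at h1 h2
  calc (parallel c d - parallel c' d') ^ 2
      = ((parallel c d - parallel c' d) + (parallel c' d - parallel c' d')) ^ 2 := by ring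
    _ ≤ 2 * ((parallel c d - parallel c' d) ^ 2 + (parallel c' d - parallel c' d') ^ 2) :=
        add_sq_le
    _ ≤ 32 / 81 * ((c - c') ^ 2 + (d - d') ^ 2) := by linarith

end Parallel

section Moments

variable {μ : Measure ℝ} [IsProbabilityMeasure μ] {a : ℝ}

lemma memLp_uncurry_parallel (ha : 0 < a) (hμ : ∀ᵐ x ∂μ, x ∈ Icc a (2 * a)) (p : ENNReal) :
    MemLp (uncurry parallel) p (μ.prod μ) := by
  refine memLp_of_bounded (a := a / 2) (b := a) ?_
    measurable_uncurry_parallel.aestronglyMeasurable p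
  filter_upwards [ae_prod_of_ae_of_ae hμ hμ] with q ⟨hc, hd⟩
  exact parallel_mem_Icc ha hc hd

lemma integral_parallel_ge (ha : 0 < a) (hμ : ∀ᵐ x ∂μ, x ∈ Icc a (2 * a)) :
    (∫ x, x ∂μ) / 2 - Var[id; μ] / (4 * a) ≤ ∫ p, uncurry parallel p ∂(μ.prod μ) := by
  have hid : MemLp id 2 μ := memLp_of_bounded hμ aestronglyMeasurable_id 2
  have hint : Integrable id μ := hid.integrable one_le_two
  have hdiff_var : Var[fun p : ℝ × ℝ => p.1 + -p.2; μ.prod μ] = 2 * Var[id; μ] := by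
    rw [variance_add_prod (X := fun x => x) (Y := fun y => -y) hid hid.neg, variance_fun_neg]
    exact (two_mul _).symm
  have hdiff_mean : ∫ p : ℝ × ℝ, p.1 + -p.2 ∂(μ.prod μ) = 0 := by
    rw [integral_add_prod (g := fun x => x) (h := fun y => -y) hint hint.neg, integral_neg]
    ring
  have hsq : ∫ p : ℝ × ℝ, (p.1 - p.2) ^ 2 ∂(μ.prod μ) = 2 * Var[id; μ] := by
    rw [← hdiff_var, variance_of_integral_eq_zero (by fun_prop) hdiff_mean]
    simp [sub_eq_add_neg]
  have hsq_int : Integrable (fun p : ℝ × ℝ => (p.1 - p.2) ^ 2) (μ.prod μ) :=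
    ((hid.comp_fst μ).sub (hid.comp_snd μ)).integrable_sq
  have hsum_int : Integrable (fun p : ℝ × ℝ => p.1 + p.2) (μ.prod μ) :=
    (hint.comp_fst μ).add (hint.comp_snd μ)
  calc (∫ x, x ∂μ) / 2 - Var[id; μ] / (4 * a)
      = ∫ p : ℝ × ℝ, ((p.1 + p.2) / 4 - (p.1 - p.2) ^ 2 / (8 * a)) ∂(μ.prod μ) := by
        rw [integral_sub (hsum_int.div_const 4) (hsq_int.div_const _), integral_div,
          integral_div, integral_add_prod (g := fun x => x) (h := fun y => y) hint hint, hsq]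
        field_simp
        ring
    _ ≤ ∫ p, uncurry parallel p ∂(μ.prod μ) := by
        refine integral_mono_ae ((hsum_int.div_const 4).sub (hsq_int.div_const _))
          ((memLp_uncurry_parallel ha hμ 1).integrable le_rfl) ?_
        filter_upwards [ae_prod_of_ae_of_ae hμ hμ] with p ⟨hc, hd⟩
        exact sub_sq_div_le_parallel ha hc.1 hd.1

lemma variance_parallel_le (ha : 0 < a) (hμ : ∀ᵐ x ∂μ, x ∈ Icc a (2 * a)) :
    Var[uncurry parallel; μ.prod μ] ≤ 64 / 81 * Var[id; μ] := by
  have hid : MemLp id 2 μ := memLp_of_bounded hμ aestronglyMeasurable_id 2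
  set m := ∫ x, x ∂μ
  have hm : m ∈ Icc a (2 * a) :=
    (convex_Icc _ _).integral_mem isClosed_Icc hμ (hid.integrable one_le_two)
  have hdev_int : Integrable (fun x => (x - m) ^ 2) μ := (hid.sub (memLp_const m)).integrable_sq
  have hfm := measurable_uncurry_parallel.aestronglyMeasurable (μ := μ.prod μ)
  calc Var[uncurry parallel; μ.prod μ]
      = Var[fun p => uncurry parallel p - parallel m m; μ.prod μ] :=
        (variance_sub_const hfm _).symm
    _ ≤ ∫ p, (uncurry parallel p - parallel m m) ^ 2 ∂(μ.prod μ) :=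
        variance_le_expectation_sq (hfm.sub aestronglyMeasurable_const)
    _ ≤ ∫ p : ℝ × ℝ, 32 / 81 * ((p.1 - m) ^ 2 + (p.2 - m) ^ 2) ∂(μ.prod μ) := by
        refine integral_mono_ae
          ((memLp_uncurry_parallel ha hμ 2).sub (memLp_const _)).integrable_sq
          (((hdev_int.comp_fst μ).add (hdev_int.comp_snd μ)).const_mul _) ?_
        filter_upwards [ae_prod_of_ae_of_ae hμ hμ] with p ⟨hc, hd⟩
        exact sq_parallel_sub_parallel_le ha hc hd hm hm
    _ = 64 / 81 * Var[id; μ] := by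
        rw [integral_const_mul, integral_add_prod hdev_int hdev_int,
          variance_eq_integral aemeasurable_id]
        simp only [id]
        ring

end Moments

section Step

variable {μ : Measure ℝ} [IsProbabilityMeasure μ] {a : ℝ}

lemma ae_mem_Icc_seriesParallel_parallel (ha : 0 < a) (hμ : ∀ᵐ x ∂μ, x ∈ Icc a (2 * a)) :
    ∀ᵐ x ∂(seriesParallel parallel μ), x ∈ Icc (5 / 2 * a) (2 * (5 / 2 * a)) := by
  filter_upwards [ae_mem_Icc_seriesParallel measurable_uncurry_parallel hμ
    fun c hc d hd => parallel_mem_Icc ha hc hd] with x ⟨hx1, hx2⟩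
  constructor <;> linarith

lemma integral_seriesParallel_parallel_ge (ha : 0 < a) (hμ : ∀ᵐ x ∂μ, x ∈ Icc a (2 * a)) :
    5 / 2 * ∫ x, x ∂μ - Var[id; μ] / (4 * a) ≤ ∫ x, x ∂(seriesParallel parallel μ) := by
  have hid : MemLp id 2 μ := memLp_of_bounded hμ aestronglyMeasurable_id 2
  rw [integral_id_seriesParallel measurable_uncurry_parallel (hid.integrable one_le_two)
    ((memLp_uncurry_parallel ha hμ 1).integrable le_rfl)]
  linarith [integral_parallel_ge ha hμ]

lemma variance_seriesParallel_parallel_le (ha : 0 < a) (hμ : ∀ᵐ x ∂μ, x ∈ Icc a (2 * a)) :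
    Var[id; seriesParallel parallel μ] ≤ 226 / 81 * Var[id; μ] := by
  rw [variance_id_seriesParallel measurable_uncurry_parallel
    (memLp_of_bounded hμ aestronglyMeasurable_id 2) (memLp_uncurry_parallel ha hμ 2)]
  linarith [variance_parallel_le ha hμ]

end Step

lemma isProbabilityMeasure_mu {f : ℝ → ℝ → ℝ} (hf : Measurable (uncurry f)) (n : ℕ) :
    IsProbabilityMeasure (mu f n) := by
  induction n with
  | zero => constructor; simp [mu, ENNReal.inv_two_add_inv_two]
  | succ n ih => exact isProbabilityMeasure_seriesParallel hf

lemma ae_mem_Icc_mu_zero (f : ℝ → ℝ → ℝ) : ∀ᵐ x ∂(mu f 0), x ∈ Icc (1 : ℝ) 2 := by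
  simp [mu, ae_add_measure_iff]

lemma integral_id_mu_zero (f : ℝ → ℝ → ℝ) : ∫ x, x ∂(mu f 0) = 3 / 2 := by
  have hint (x : ℝ) : Integrable (fun y : ℝ => y) ((2 : ENNReal)⁻¹ • Measure.dirac x) :=
    (integrable_dirac (by simp)).smul_measure (by simp)
  norm_num [mu, integral_add_measure (hint 1) (hint 2)]

-- `904/2025 = (226/81) / (5/2)²`; the term `(904/2025)^n / 20` absorbs the loss
-- `V_n / (4 a_n)` of each step because `904/2025 ≤ 1/2`.
lemma mu_parallel_bounds (n : ℕ) :
    (∀ᵐ x ∂(mu parallel n), x ∈ Icc ((5 / 2) ^ n) (2 * (5 / 2) ^ n)) ∧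
    (5 / 2 : ℝ) ^ n * (1.43 + (904 / 2025) ^ n / 20) ≤ ∫ x, x ∂(mu parallel n) ∧
    Var[id; mu parallel n] ≤ (904 / 2025) ^ n * ((5 / 2) ^ n) ^ 2 / 4 := by
  induction n with
  | zero =>
    have := isProbabilityMeasure_mu measurable_uncurry_parallel 0
    refine ⟨by simpa using ae_mem_Icc_mu_zero parallel, by rw [integral_id_mu_zero]; norm_num, ?_⟩
    calc Var[id; mu parallel 0] ≤ ((2 - 1) / 2) ^ 2 :=
          variance_le_sq_of_bounded (ae_mem_Icc_mu_zero parallel) aemeasurable_id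
      _ = _ := by norm_num
  | succ n ih =>
    obtain ⟨hsupp, hmean, hvar⟩ := ih
    have := isProbabilityMeasure_mu measurable_uncurry_parallel n
    set A : ℝ := (5 / 2) ^ n
    set R : ℝ := (904 / 2025) ^ n
    have hA : 0 < A := by positivity
    have hR : 0 ≤ R := by positivity
    rw [mu_succ, pow_succ, pow_succ, mul_comm A]
    refine ⟨ae_mem_Icc_seriesParallel_parallel hA hsupp, ?_, ?_⟩
    · have hstep := integral_seriesParallel_parallel_ge hA hsupp
      have hloss : Var[id; mu parallel n] / (4 * A) ≤ R * A / 16 := by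
        rw [div_le_iff₀ (by positivity)]
        nlinarith
      nlinarith
    · calc Var[id; seriesParallel parallel (mu parallel n)]
          ≤ 226 / 81 * Var[id; mu parallel n] := variance_seriesParallel_parallel_le hA hsupp
        _ ≤ 226 / 81 * (R * A ^ 2 / 4) := by gcongr
        _ = R * (904 / 2025) * (5 / 2 * A) ^ 2 / 4 := by ring

theorem stmt18 (n : ℕ) :
    (1.43 : ℝ) * (5 / 2) ^ n ≤ En (fun t s => t * s / (t + s)) n := by
  have hmean := (mu_parallel_bounds n).2.1
  have hslack : 0 ≤ (5 / 2 : ℝ) ^ n * ((904 / 2025) ^ n / 20) := by positivity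
  change _ ≤ ∫ x, x ∂(mu parallel n)
  linarith
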